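/- Let (c₁,c₂) ∈ ℝ². The polynomial D₂(c₁,c₂;·) has exactly two roots, counted with multiplicity, with real part ≤ −1/2 (and hence its remaining two roots have real part > −1/2) if and only if Re[α₂(c₁,c₂)] ≤ −1/2. -/

import Mathlib

/-!
In the variable `y = (z - 3/2)²` the quartic becomes the quadratic
`y² - (5/2 - 2c₁) y + 9/16 + 3c₁/2 + c₂`, whose roots are `(5 - 4c₁ ± 4√Δ)/4` with
`Δ = 1 - 4c₁ + c₁² - c₂`; hence the roots of `D₂` are `α₁, α₂, α₃, α₄`.
Since `Re √w ≥ 0`, the roots `α₃, α₄` lie to the right of `-1/2`. From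
`Re √w = √((|w| + Re w)/2)`, and since `|w| + Re w` only grows when `w` is moved to the right,
`Re √(r - v) ≤ Re √(r + v)` for real `r` and `Re v ≥ 0` (compare `r + v` with `conj (r - v)`).
With `v = 4√Δ` this gives `Re α₁ ≤ Re α₂`, so two roots lie in `Re z ≤ -1/2` exactly when
`α₂` does.
-/

noncomputable section

/-- The principal branch of the complex square root:
`√z = √r·e^{iφ/2}` for `z = r·e^{iφ}` with `r > 0` and `-π < φ ≤ π`. -/
def csqrt (z : ℂ) : ℂ := z ^ (1/2 : ℂ)

/-- `α₁(c₁,c₂) = 3/2 - (1/2)√(5-4c₁+4√(1-4c₁+c₁²-c₂))`. -/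
def alpha1 (c₁ c₂ : ℝ) : ℂ :=
  3/2 - (1/2) * csqrt (5 - 4 * (c₁ : ℂ) + 4 * csqrt (1 - 4 * (c₁ : ℂ) + (c₁ : ℂ) ^ 2 - (c₂ : ℂ)))

/-- `α₂(c₁,c₂) = 3/2 - (1/2)√(5-4c₁-4√(1-4c₁+c₁²-c₂))`. -/
def alpha2 (c₁ c₂ : ℝ) : ℂ :=
  3/2 - (1/2) * csqrt (5 - 4 * (c₁ : ℂ) - 4 * csqrt (1 - 4 * (c₁ : ℂ) + (c₁ : ℂ) ^ 2 - (c₂ : ℂ)))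

/-- `α₃(c₁,c₂) = 3/2 + (1/2)√(5-4c₁-4√(1-4c₁+c₁²-c₂))`. -/
def alpha3 (c₁ c₂ : ℝ) : ℂ :=
  3/2 + (1/2) * csqrt (5 - 4 * (c₁ : ℂ) - 4 * csqrt (1 - 4 * (c₁ : ℂ) + (c₁ : ℂ) ^ 2 - (c₂ : ℂ)))

/-- `α₄(c₁,c₂) = 3/2 + (1/2)√(5-4c₁+4√(1-4c₁+c₁²-c₂))`. -/
def alpha4 (c₁ c₂ : ℝ) : ℂ :=
  3/2 + (1/2) * csqrt (5 - 4 * (c₁ : ℂ) + 4 * csqrt (1 - 4 * (c₁ : ℂ) + (c₁ : ℂ) ^ 2 - (c₂ : ℂ)))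

open Polynomial in
/-- The quartic polynomial `D₂(c₁,c₂;·) = X(X-1)(X-2)(X-3) + c₁[X(X-1)+(X-2)(X-3)] + c₂`
as a polynomial over `ℂ`. -/
def D2poly (c₁ c₂ : ℝ) : Polynomial ℂ :=
  X * (X - 1) * (X - 2) * (X - 3) + C (c₁ : ℂ) * (X * (X - 1) + (X - 2) * (X - 3)) + C (c₂ : ℂ)

lemma csqrt_sq (z : ℂ) : csqrt z ^ 2 = z := by
  simp [csqrt, one_div]

lemma re_csqrt (z : ℂ) : (csqrt z).re = √((‖z‖ + z.re) / 2) := by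
  rw [csqrt, one_div]
  exact Complex.cpow_inv_two_re z

lemma re_csqrt_nonneg (z : ℂ) : 0 ≤ (csqrt z).re :=
  re_csqrt z ▸ Real.sqrt_nonneg _

lemma re_csqrt_sub_le_re_csqrt_add (r : ℝ) {v : ℂ} (hv : 0 ≤ v.re) :
    (csqrt (r - v)).re ≤ (csqrt (r + v)).re := by
  rw [re_csqrt, re_csqrt]
  gcongr √(?_ / 2)
  have hnorm : ‖(r : ℂ) - v‖ ≤ ‖(r : ℂ) + v‖ + 2 * v.re :=
    calc ‖(r : ℂ) - v‖ = ‖(r : ℂ) + v - ((2 * v.re : ℝ) : ℂ)‖ := by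
          rw [← Complex.norm_conj]
          congr 1
          apply Complex.ext <;> simp
          ring
      _ ≤ ‖(r : ℂ) + v‖ + ‖((2 * v.re : ℝ) : ℂ)‖ := norm_sub_le _ _
      _ = ‖(r : ℂ) + v‖ + 2 * v.re := by
          rw [Complex.norm_real, Real.norm_of_nonneg (by positivity)]
  simp only [Complex.sub_re, Complex.add_re, Complex.ofReal_re]
  linarith

open Polynomial in
lemma D2poly_eq_prod (c₁ c₂ : ℝ) :
    D2poly c₁ c₂ = (({alpha1 c₁ c₂, alpha2 c₁ c₂, alpha3 c₁ c₂, alpha4 c₁ c₂} : Multiset ℂ).map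
      fun a => X - C a).prod := by
  apply Polynomial.funext
  intro x
  set u := csqrt (1 - 4 * (c₁ : ℂ) + (c₁ : ℂ) ^ 2 - (c₂ : ℂ)) with hu_def
  set A := csqrt (5 - 4 * (c₁ : ℂ) + 4 * u) with hA_def
  set B := csqrt (5 - 4 * (c₁ : ℂ) - 4 * u) with hB_def
  have hu : u ^ 2 = 1 - 4 * (c₁ : ℂ) + (c₁ : ℂ) ^ 2 - (c₂ : ℂ) := csqrt_sq _
  have hA : A ^ 2 = 5 - 4 * (c₁ : ℂ) + 4 * u := csqrt_sq _
  have hB : B ^ 2 = 5 - 4 * (c₁ : ℂ) - 4 * u := csqrt_sq _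
  simp only [D2poly, alpha1, alpha2, alpha3, alpha4, ← hu_def, ← hA_def, ← hB_def,
    Multiset.insert_eq_cons, Multiset.map_cons, Multiset.prod_cons, Multiset.map_singleton,
    Multiset.prod_singleton, eval_add, eval_mul, eval_sub, eval_X, eval_C, eval_one, eval_ofNat]
  linear_combination hu + ((x - 3/2) ^ 2 - B ^ 2 / 4) / 4 * hA +
    ((x - 3/2) ^ 2 - (5 - 4 * (c₁ : ℂ) + 4 * u) / 4) / 4 * hB

lemma roots_D2poly (c₁ c₂ : ℝ) :
    (D2poly c₁ c₂).roots = {alpha1 c₁ c₂, alpha2 c₁ c₂, alpha3 c₁ c₂, alpha4 c₁ c₂} := by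
  rw [D2poly_eq_prod, Polynomial.roots_multiset_prod_X_sub_C]

lemma alpha1_re_le_alpha2_re (c₁ c₂ : ℝ) : (alpha1 c₁ c₂).re ≤ (alpha2 c₁ c₂).re := by
  set u := csqrt (1 - 4 * (c₁ : ℂ) + (c₁ : ℂ) ^ 2 - (c₂ : ℂ))
  have hu : 0 ≤ (4 * u).re := by simpa using re_csqrt_nonneg _
  have key := re_csqrt_sub_le_re_csqrt_add (5 - 4 * c₁) hu
  push_cast at key
  simp only [alpha1, alpha2, Complex.sub_re, Complex.mul_re]
  norm_num
  linarith

lemma neg_half_lt_alpha3_re (c₁ c₂ : ℝ) : -1/2 < (alpha3 c₁ c₂).re := by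
  have := re_csqrt_nonneg
    (5 - 4 * (c₁ : ℂ) - 4 * csqrt (1 - 4 * (c₁ : ℂ) + (c₁ : ℂ) ^ 2 - (c₂ : ℂ)))
  simp only [alpha3, Complex.add_re, Complex.mul_re]
  norm_num
  linarith

lemma neg_half_lt_alpha4_re (c₁ c₂ : ℝ) : -1/2 < (alpha4 c₁ c₂).re := by
  have := re_csqrt_nonneg
    (5 - 4 * (c₁ : ℂ) + 4 * csqrt (1 - 4 * (c₁ : ℂ) + (c₁ : ℂ) ^ 2 - (c₂ : ℂ)))
  simp only [alpha4, Complex.add_re, Complex.mul_re]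
  norm_num
  linarith

open scoped Classical in
/-- `D₂(c₁,c₂;·)` has exactly two roots (with multiplicity) with real part `≤ -1/2`
(and hence its remaining two roots have real part `> -1/2`) iff `Re α₂(c₁,c₂) ≤ -1/2`. -/
theorem stmt6 (c₁ c₂ : ℝ) :
    (Multiset.card ((D2poly c₁ c₂).roots.filter fun z => z.re ≤ -1/2) = 2 ∧
      Multiset.card ((D2poly c₁ c₂).roots.filter fun z => -1/2 < z.re) = 2) ↔
    (alpha2 c₁ c₂).re ≤ -1/2 := by
  have h₁₂ := alpha1_re_le_alpha2_re c₁ c₂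
  have h₃ := neg_half_lt_alpha3_re c₁ c₂
  have h₄ := neg_half_lt_alpha4_re c₁ c₂
  rw [roots_D2poly]
  by_cases h₂ : (alpha2 c₁ c₂).re ≤ -1/2
  · have h₁ := h₁₂.trans h₂
    simp [Multiset.filter_singleton, h₁, h₂, h₃, h₄, not_le.2 h₃, not_le.2 h₄, not_lt.2 h₁,
      not_lt.2 h₂]
  · by_cases h₁ : (alpha1 c₁ c₂).re ≤ -1/2 <;>
      simp [Multiset.filter_cons, Multiset.filter_singleton, h₁, h₂, not_le.2 h₃, not_le.2 h₄]
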